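/- arXiv:1906.01229 — 2 statements merged into one kernel-verified Lean document; each statement's English description precedes it below -/
import Mathlib

section
/- Let N ≥ 2 and let g : ℝ → ℝ be strictly convex and nonincreasing on the interval (0, 2]. Let 0 ≤ θ₁ < θ₂ < ⋯ < θ_N < 2π and set p_j := (cos θ_j, sin θ_j) ∈ ℝ², points on the unit circle. Then ∑_{1 ≤ j < j' ≤ N} g(‖p_j − p_{j'}‖) ≥ ∑_{1 ≤ j < j' ≤ N} g(2 sin(π(j' − j)/N)), and the inequality is strict unless all N cyclic angular gaps θ₂ − θ₁, …, θ_N − θ_{N−1}, 2π − θ_N + θ₁ are equal to 2π/N. -/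
/-!
For a shift `0 < m < N`, the `N` arcs running counterclockwise from `θ j` to `θ (j + m)`
(indices mod `N`) lie in `(0, 2π)`, add up to `2πm`, and an arc `A` subtends a chord of length
`2 sin (A / 2)`. As `g` is convex and strictly decreasing and `2 sin (· / 2)` is strictly
concave, `A ↦ g (2 sin (A / 2))` is strictly convex on `(0, 2π)`, so by Jensen the `N` chords of
each shift carry at least the energy of those of the regular polygon, whose arcs all equal
`2πm / N`.
Summing over the shifts counts every pair twice. For `m = 1` the arcs are the cyclic gaps, and
Jensen is strict unless they all equal `2π / N`.
-/

/-- Periodic extension of a configuration `y` on the loop of circumference `2π`. -/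
noncomputable def periodicExt {N : ℕ} (y : Fin N → ℝ) (k : ℕ) : ℝ :=
  if h : 0 < N then y ⟨k % N, Nat.mod_lt k h⟩ + 2 * Real.pi * (k / N : ℕ) else 0

/-- The `j`-th cyclic gap of the configuration `y` on the loop of circumference `2π`. -/
noncomputable def cyclicGap {N : ℕ} (y : Fin N → ℝ) (j : Fin N) : ℝ :=
  periodicExt y ((j : ℕ) + 1) - periodicExt y (j : ℕ)

/-- A configuration is congruent to the equidistant one iff all cyclic gaps are `2π/N`. -/
def isEquidistant {N : ℕ} (y : Fin N → ℝ) : Prop :=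
  ∀ j : Fin N, cyclicGap y j = 2 * Real.pi / N

/-- The point of the unit circle in the Euclidean plane with polar angle `t`. -/
noncomputable def circlePoint (t : ℝ) : EuclideanSpace ℝ (Fin 2) :=
  (WithLp.equiv 2 (Fin 2 → ℝ)).symm ![Real.cos t, Real.sin t]

open Real Finset
open Fin.NatCast

lemma norm_circlePoint_sub (a b : ℝ) :
    ‖circlePoint a - circlePoint b‖ = 2 * |sin ((a - b) / 2)| := by
  obtain ⟨u, v, rfl, rfl⟩ : ∃ u v, a = u + v ∧ b = u - v :=
    ⟨(a + b) / 2, (a - b) / 2, by ring, by ring⟩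
  rw [EuclideanSpace.norm_eq, ← sqrt_sq (by positivity : 0 ≤ 2 * |sin ((u + v - (u - v)) / 2)|)]
  congr 1
  simp only [circlePoint, WithLp.equiv_symm_apply, PiLp.sub_apply, Fin.sum_univ_two,
    Matrix.cons_val_zero, Matrix.cons_val_one, Matrix.cons_val_fin_one, Real.norm_eq_abs, sq_abs,
    add_sub_sub_cancel, add_self_div_two, mul_pow, cos_add, cos_sub, sin_add, sin_sub]
  linear_combination (4 * sin v ^ 2) * sin_sq_add_cos_sq u

lemma circlePoint_add_nat_mul_two_pi (t : ℝ) (n : ℕ) :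
    circlePoint (t + n * (2 * π)) = circlePoint t := by
  simp only [circlePoint, cos_add_nat_mul_two_pi, sin_add_nat_mul_two_pi]

lemma StrictConvexOn.strictAntiOn_of_antitoneOn {s : Set ℝ} {g : ℝ → ℝ}
    (hconv : StrictConvexOn ℝ s g) (hanti : AntitoneOn g s) : StrictAntiOn g s := by
  intro x hx y hy hxy
  refine (hanti hx hy hxy.le).lt_of_ne fun heq => ?_
  have hmid : (1 / 2 : ℝ) • x + (1 / 2 : ℝ) • y ∈ s :=
    hconv.1 hx hy (by norm_num) (by norm_num) (by norm_num)
  have hlt := hconv.2 hx hy hxy.ne (by norm_num : (0 : ℝ) < 1 / 2)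
    (by norm_num : (0 : ℝ) < 1 / 2) (by norm_num)
  have hge := hanti hmid hy (by simp only [smul_eq_mul]; linarith)
  simp only [smul_eq_mul] at hlt hge
  linarith

lemma strictConcaveOn_two_mul_sin_half :
    StrictConcaveOn ℝ (Set.Ioo 0 (2 * π)) (fun A => 2 * sin (A / 2)) := by
  refine ⟨convex_Ioo _ _, fun x hx y hy hxy a b ha hb hab => ?_⟩
  have h := strictConcaveOn_sin_Icc.2 (x := x / 2) (y := y / 2)
    ⟨by linarith [hx.1], by linarith [hx.2]⟩ ⟨by linarith [hy.1], by linarith [hy.2]⟩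
    (by contrapose! hxy; linarith) ha hb hab
  simp only [smul_eq_mul] at h ⊢
  rw [show (a * x + b * y) / 2 = a * (x / 2) + b * (y / 2) by ring]
  linarith

lemma StrictConvexOn.comp_two_mul_sin_half {g : ℝ → ℝ}
    (hconv : StrictConvexOn ℝ (Set.Ioc 0 2) g) (hanti : AntitoneOn g (Set.Ioc 0 2)) :
    StrictConvexOn ℝ (Set.Ioo 0 (2 * π)) (fun A => g (2 * sin (A / 2))) := by
  have hmaps : (fun A => 2 * sin (A / 2)) '' Set.Ioo 0 (2 * π) ⊆ Set.Ioc 0 2 := by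
    rintro _ ⟨A, hA, rfl⟩
    have := sin_pos_of_pos_of_lt_pi (x := A / 2) (by linarith [hA.1]) (by linarith [hA.2])
    exact ⟨by positivity, by linarith [sin_le_one (A / 2)]⟩
  have himage : Convex ℝ ((fun A => 2 * sin (A / 2)) '' Set.Ioo 0 (2 * π)) :=
    (isPreconnected_Ioo.image _ (by fun_prop)).convex
  exact (hconv.convexOn.subset hmaps himage).comp_strictConcaveOn
    strictConcaveOn_two_mul_sin_half ((hconv.strictAntiOn_of_antitoneOn hanti).mono hmaps)

section PeriodicExt

variable {N : ℕ} [NeZero N] (θ : Fin N → ℝ)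

lemma periodicExt_eq (k : ℕ) : periodicExt θ k = θ k + 2 * π * (k / N : ℕ) :=
  dif_pos (NeZero.pos N)

lemma periodicExt_add_card (k : ℕ) : periodicExt θ (k + N) = periodicExt θ k + 2 * π := by
  simp only [periodicExt_eq, Nat.cast_add, Fin.natCast_self, add_zero,
    Nat.add_div_right k (NeZero.pos N)]
  push_cast
  ring

lemma circlePoint_periodicExt (k : ℕ) : circlePoint (periodicExt θ k) = circlePoint (θ k) := by
  rw [periodicExt_eq, mul_comm (2 * π), circlePoint_add_nat_mul_two_pi]

variable {θ}

lemma strictMono_periodicExt (hmono : StrictMono θ) (hmem : ∀ j, θ j ∈ Set.Ico 0 (2 * π)) :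
    StrictMono (periodicExt θ) := by
  intro k l hkl
  simp only [periodicExt_eq]
  rcases (Nat.div_le_div_right (c := N) hkl.le).lt_or_eq with hdiv | hdiv
  · have hq : ((k / N : ℕ) : ℝ) + 1 ≤ (l / N : ℕ) := by exact_mod_cast hdiv
    have := mul_le_mul_of_nonneg_left hq (by positivity : (0 : ℝ) ≤ 2 * π)
    linarith [(hmem k).2, (hmem l).1]
  · have hmod : k % N < l % N := by
      have := Nat.div_add_mod k N
      have := Nat.div_add_mod l N
      rw [hdiv] at *
      omega
    have : θ k < θ l := hmono (by simpa [Fin.lt_def, Fin.val_natCast] using hmod)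
    rw [hdiv]
    linarith

end PeriodicExt

lemma sum_filter_lt_add_sum_filter_lt {α M : Type*} [LinearOrder α] [Fintype α]
    [AddCommMonoid M] (F : α → α → M) (hF : ∀ a b, F a b = F b a) :
    ∑ p ∈ univ.filter (fun p : α × α => p.1 < p.2), F p.1 p.2
      + ∑ p ∈ univ.filter (fun p : α × α => p.1 < p.2), F p.1 p.2
      = ∑ p ∈ univ.offDiag, F p.1 p.2 := by
  have hswap : ∑ p ∈ univ.filter (fun p : α × α => p.1 < p.2), F p.1 p.2
      = ∑ p ∈ univ.filter (fun p : α × α => p.2 < p.1), F p.1 p.2 :=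
    Finset.sum_equiv (Equiv.prodComm α α) (by simp) (by simp [hF])
  nth_rewrite 2 [hswap]
  have hoff : (univ : Finset α).offDiag = univ.filter (fun p : α × α => p.1 ≠ p.2) := by
    ext; simp
  rw [hoff, sum_filter, sum_filter, sum_filter, ← sum_add_distrib]
  refine sum_congr rfl fun p _ => ?_
  rcases lt_trichotomy p.1 p.2 with h | h | h
  · simp [h, h.ne, h.not_gt]
  · simp [h]
  · simp [h, h.ne', h.not_gt]

lemma sum_offDiag_eq_sum_sum_add {G M : Type*} [AddGroup G] [Fintype G] [DecidableEq G]
    [AddCommMonoid M] (F : G → G → M) :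
    ∑ p ∈ univ.offDiag, F p.1 p.2 = ∑ d ∈ univ.erase 0, ∑ j, F j (j + d) := by
  rw [← sum_product']
  refine (sum_nbij' (fun q => (q.2, q.2 + q.1)) (fun p => (-p.1 + p.2, p.1)) ?_ ?_ ?_ ?_ ?_).symm
  all_goals simp [neg_add_eq_zero]

section Jensen

variable {ι E : Type*} [Fintype ι] [Nonempty ι] [AddCommGroup E] [Module ℝ E] {s : Set E}
  {f : E → ℝ} {p : ι → E}

lemma ConvexOn.card_mul_map_mean_le (hf : ConvexOn ℝ s f) (hp : ∀ i, p i ∈ s) :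
    Fintype.card ι * f ((Fintype.card ι : ℝ)⁻¹ • ∑ i, p i) ≤ ∑ i, f (p i) := by
  have h := hf.map_sum_le (t := univ) (w := fun _ => (Fintype.card ι : ℝ)⁻¹)
    (fun _ _ => by positivity) (by simp [card_univ]) (fun i _ => hp i)
  rw [← smul_sum, ← smul_sum, smul_eq_mul] at h
  exact (le_inv_mul_iff₀ (by positivity)).mp h

lemma StrictConvexOn.card_mul_map_mean_lt (hf : StrictConvexOn ℝ s f) (hp : ∀ i, p i ∈ s)
    (hne : ∃ i, p i ≠ (Fintype.card ι : ℝ)⁻¹ • ∑ i, p i) :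
    Fintype.card ι * f ((Fintype.card ι : ℝ)⁻¹ • ∑ i, p i) < ∑ i, f (p i) := by
  have h := (hf.map_sum_lt_iff_of_pos' (t := univ) (w := fun _ => (Fintype.card ι : ℝ)⁻¹)
    (fun _ _ => by positivity) (by simp [card_univ]) (fun i _ => hp i)).mpr
    (by simpa [← smul_sum] using hne)
  rw [← smul_sum, ← smul_sum, smul_eq_mul] at h
  exact (lt_inv_mul_iff₀ (by positivity)).mp h

end Jensen

/-- The counterclockwise angle from `θ j` to `θ (j + m)`, indices taken mod `N`. -/
noncomputable def cyclicArc {N : ℕ} (θ : Fin N → ℝ) (m : ℕ) (j : Fin N) : ℝ :=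
  periodicExt θ (j + m) - periodicExt θ j

section CyclicArc

variable {N : ℕ} [NeZero N] {θ : Fin N → ℝ}

lemma sum_cyclicArc (θ : Fin N → ℝ) (m : ℕ) : ∑ j, cyclicArc θ m j = m * (2 * π) := by
  induction m with
  | zero => simp [cyclicArc]
  | succ m ih =>
    have hturn : ∑ j : Fin N, (periodicExt θ (j + 1 + m) - periodicExt θ (j + m)) = 2 * π := by
      rw [Fin.sum_univ_eq_sum_range (fun j => periodicExt θ (j + 1 + m) - periodicExt θ (j + m)),
        sum_range_sub (fun j => periodicExt θ (j + m)), add_comm N, periodicExt_add_card, zero_add]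
      ring
    calc ∑ j, cyclicArc θ (m + 1) j
        = ∑ j, (cyclicArc θ m j + (periodicExt θ (j + 1 + m) - periodicExt θ (j + m))) := by
          refine sum_congr rfl fun j _ => ?_
          rw [cyclicArc, cyclicArc, add_right_comm, add_assoc]
          ring
      _ = (m + 1 : ℕ) * (2 * π) := by
          rw [sum_add_distrib, ih, hturn]
          push_cast
          ring

lemma mean_cyclicArc (θ : Fin N → ℝ) (m : ℕ) :
    (Fintype.card (Fin N) : ℝ)⁻¹ • ∑ j, cyclicArc θ m j = 2 * π * m / N := by
  rw [sum_cyclicArc, Fintype.card_fin, smul_eq_mul]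
  field_simp

lemma cyclicArc_mem_Ioo (hmono : StrictMono θ) (hmem : ∀ j, θ j ∈ Set.Ico 0 (2 * π))
    {m : ℕ} (hm : 0 < m) (hmN : m < N) (j : Fin N) :
    cyclicArc θ m j ∈ Set.Ioo 0 (2 * π) := by
  have hP := strictMono_periodicExt hmono hmem
  have hlo := hP (show (j : ℕ) < j + m by omega)
  have hhi := hP (show (j : ℕ) + m < j + N by omega)
  rw [periodicExt_add_card] at hhi
  exact ⟨sub_pos.mpr hlo, by rw [cyclicArc]; linarith⟩

lemma norm_circlePoint_sub_eq_cyclicArc (hmono : StrictMono θ)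
    (hmem : ∀ j, θ j ∈ Set.Ico 0 (2 * π)) {d : Fin N} (hd : d ≠ 0) (j : Fin N) :
    ‖circlePoint (θ j) - circlePoint (θ (j + d))‖ = 2 * sin (cyclicArc θ d j / 2) := by
  have hA := cyclicArc_mem_Ioo hmono hmem (Fin.pos_iff_ne_zero.mpr hd) d.is_lt j
  have hj : circlePoint (θ j) = circlePoint (periodicExt θ j) := by
    rw [circlePoint_periodicExt, Fin.cast_val_eq_self]
  have hjd : circlePoint (θ (j + d)) = circlePoint (periodicExt θ (j + d : ℕ)) := by
    rw [circlePoint_periodicExt, Nat.cast_add, Fin.cast_val_eq_self, Fin.cast_val_eq_self]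
  have hpos : 0 < sin (cyclicArc θ d j / 2) :=
    sin_pos_of_pos_of_lt_pi (by linarith [hA.1]) (by linarith [hA.2])
  rw [hj, hjd, norm_circlePoint_sub, ← neg_sub, neg_div, sin_neg, abs_neg]
  exact congrArg (2 * ·) (abs_of_pos hpos)

lemma two_mul_sum_chord_eq_sum_cyclicArc (hmono : StrictMono θ)
    (hmem : ∀ j, θ j ∈ Set.Ico 0 (2 * π)) (g : ℝ → ℝ) :
    2 * ∑ p ∈ univ.filter (fun p : Fin N × Fin N => p.1 < p.2),
        g ‖circlePoint (θ p.1) - circlePoint (θ p.2)‖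
      = ∑ d ∈ (univ : Finset (Fin N)).erase 0, ∑ j, g (2 * sin (cyclicArc θ d j / 2)) := by
  let F : Fin N → Fin N → ℝ := fun a b => g ‖circlePoint (θ a) - circlePoint (θ b)‖
  rw [two_mul, sum_filter_lt_add_sum_filter_lt F fun a b => by simp only [F, norm_sub_rev],
    sum_offDiag_eq_sum_sum_add F]
  refine sum_congr rfl fun d hd => sum_congr rfl fun j _ => ?_
  simp only [F, norm_circlePoint_sub_eq_cyclicArc hmono hmem (ne_of_mem_erase hd)]

variable {f : ℝ → ℝ}

lemma card_mul_le_sum_cyclicArc (hmono : StrictMono θ) (hmem : ∀ j, θ j ∈ Set.Ico 0 (2 * π))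
    (hf : ConvexOn ℝ (Set.Ioo 0 (2 * π)) f) {m : ℕ} (hm : 0 < m) (hmN : m < N) :
    N * f (2 * π * m / N) ≤ ∑ j, f (cyclicArc θ m j) := by
  have h := hf.card_mul_map_mean_le (cyclicArc_mem_Ioo hmono hmem hm hmN)
  rwa [mean_cyclicArc, Fintype.card_fin] at h

lemma card_mul_lt_sum_cyclicGap (hmono : StrictMono θ) (hmem : ∀ j, θ j ∈ Set.Ico 0 (2 * π))
    (hf : StrictConvexOn ℝ (Set.Ioo 0 (2 * π)) f) (hN : 1 < N) (hθ : ¬ isEquidistant θ) :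
    N * f (2 * π / N) < ∑ j, f (cyclicGap θ j) := by
  obtain ⟨j, hj⟩ : ∃ j, cyclicGap θ j ≠ 2 * π / N := by simpa [isEquidistant] using hθ
  have h := hf.card_mul_map_mean_lt (cyclicArc_mem_Ioo hmono hmem one_pos hN)
    ⟨j, by rwa [mean_cyclicArc, Nat.cast_one, mul_one]⟩
  rwa [mean_cyclicArc, Nat.cast_one, mul_one, Fintype.card_fin] at h

end CyclicArc

noncomputable def regularAngle (N : ℕ) (j : Fin N) : ℝ := 2 * π * j / N

section RegularAngle

variable {N : ℕ} [NeZero N]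

lemma strictMono_regularAngle : StrictMono (regularAngle N) := fun a b hab => by
  have : (0 : ℝ) < N := by exact_mod_cast NeZero.pos N
  unfold regularAngle
  gcongr
  exact_mod_cast hab

lemma regularAngle_mem_Ico (j : Fin N) : regularAngle N j ∈ Set.Ico 0 (2 * π) := by
  have hN : (0 : ℝ) < N := by exact_mod_cast NeZero.pos N
  have hj : (j : ℝ) < N := by exact_mod_cast j.is_lt
  refine ⟨by unfold regularAngle; positivity, ?_⟩
  rw [regularAngle, div_lt_iff₀ hN]
  nlinarith [pi_pos]

lemma periodicExt_regularAngle (k : ℕ) : periodicExt (regularAngle N) k = 2 * π * k / N := by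
  have hN : (N : ℝ) ≠ 0 := by exact_mod_cast NeZero.ne N
  have hk : ((k % N : ℕ) : ℝ) + N * (k / N : ℕ) = k := by exact_mod_cast Nat.mod_add_div k N
  rw [periodicExt_eq, regularAngle, Fin.val_natCast, ← hk]
  field_simp

lemma cyclicArc_regularAngle (m : ℕ) (j : Fin N) :
    cyclicArc (regularAngle N) m j = 2 * π * m / N := by
  rw [cyclicArc, periodicExt_regularAngle, periodicExt_regularAngle]
  push_cast
  ring

lemma norm_circlePoint_regularAngle_sub {j k : Fin N} (hjk : j < k) :
    ‖circlePoint (regularAngle N j) - circlePoint (regularAngle N k)‖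
      = 2 * sin (π * ((k : ℕ) - (j : ℕ) : ℕ) / N) := by
  have hN : (0 : ℝ) < N := by exact_mod_cast NeZero.pos N
  have hkN : (k : ℝ) < N := by exact_mod_cast k.is_lt
  have hjk' : (j : ℝ) < k := by exact_mod_cast hjk
  rw [norm_circlePoint_sub, Nat.cast_sub hjk.le, regularAngle, regularAngle,
    show (2 * π * j / N - 2 * π * k / N) / 2 = -(π * (k - j) / N) by ring, sin_neg, abs_neg,
    abs_of_nonneg (sin_nonneg_of_nonneg_of_le_pi (by positivity) ?_)]
  rw [div_le_iff₀ hN]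
  nlinarith [pi_pos]

lemma two_mul_sum_chord_regularAngle (g : ℝ → ℝ) :
    2 * ∑ p ∈ univ.filter (fun p : Fin N × Fin N => p.1 < p.2),
        g (2 * sin (π * ((p.2 : ℕ) - (p.1 : ℕ) : ℕ) / N))
      = ∑ d ∈ (univ : Finset (Fin N)).erase 0,
          N * g (2 * sin (2 * π * (d : ℕ) / N / 2)) := by
  rw [← sum_congr rfl fun p hp =>
      congrArg g (norm_circlePoint_regularAngle_sub (mem_filter.mp hp).2),
    two_mul_sum_chord_eq_sum_cyclicArc strictMono_regularAngle regularAngle_mem_Ico]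
  simp only [cyclicArc_regularAngle, sum_const, card_univ, Fintype.card_fin, nsmul_eq_mul]

end RegularAngle

/-- Let N ≥ 2 and let g : ℝ → ℝ be strictly convex and nonincreasing on
(0, 2]. Let 0 ≤ θ₁ < ⋯ < θ_N < 2π and p_j := (cos θ_j, sin θ_j) on the unit circle. Then
∑_{j<j'} g(‖p_j − p_{j'}‖) ≥ ∑_{j<j'} g(2 sin(π(j'−j)/N)), and the inequality is strict
unless all N cyclic angular gaps equal 2π/N. -/
theorem circle_convex_chord_energy_min (N : ℕ) (hN : 2 ≤ N) (g : ℝ → ℝ)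
    (hconv : StrictConvexOn ℝ (Set.Ioc 0 (2:ℝ)) g)
    (hanti : AntitoneOn g (Set.Ioc 0 (2:ℝ)))
    (θ : Fin N → ℝ) (hmono : StrictMono θ)
    (hmem : ∀ j, θ j ∈ Set.Ico 0 (2 * Real.pi)) :
    (∑ p ∈ Finset.univ.filter (fun p : Fin N × Fin N => p.1 < p.2),
        g ‖circlePoint (θ p.1) - circlePoint (θ p.2)‖)
      ≥ (∑ p ∈ Finset.univ.filter (fun p : Fin N × Fin N => p.1 < p.2),
          g (2 * Real.sin (Real.pi * ((p.2 : ℕ) - (p.1 : ℕ) : ℕ) / N))) ∧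
    (¬ isEquidistant θ →
      (∑ p ∈ Finset.univ.filter (fun p : Fin N × Fin N => p.1 < p.2),
          g ‖circlePoint (θ p.1) - circlePoint (θ p.2)‖)
        > (∑ p ∈ Finset.univ.filter (fun p : Fin N × Fin N => p.1 < p.2),
            g (2 * Real.sin (Real.pi * ((p.2 : ℕ) - (p.1 : ℕ) : ℕ) / N)))) := by
  have : NeZero N := ⟨by omega⟩
  have hf := hconv.comp_two_mul_sin_half hanti
  have hE := two_mul_sum_chord_eq_sum_cyclicArc hmono hmem g
  have hE₀ := two_mul_sum_chord_regularAngle (N := N) g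
  have hblock : ∀ d ∈ (univ : Finset (Fin N)).erase 0,
      N * g (2 * sin (2 * π * (d : ℕ) / N / 2)) ≤ ∑ j, g (2 * sin (cyclicArc θ d j / 2)) :=
    fun d hd => card_mul_le_sum_cyclicArc hmono hmem hf.convexOn
      (Fin.pos_iff_ne_zero.mpr (ne_of_mem_erase hd)) d.is_lt
  refine ⟨by linarith [sum_le_sum hblock], fun hθ => ?_⟩
  have hone : ((1 : Fin N) : ℕ) = 1 := (Fin.val_one' N).trans (Nat.mod_eq_of_lt (by omega))
  have hone_mem : (1 : Fin N) ∈ univ.erase 0 :=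
    mem_erase.mpr ⟨Fin.ne_of_val_ne (by rw [hone, Fin.val_zero]; exact one_ne_zero),
      mem_univ _⟩
  have hstrict : N * g (2 * sin (2 * π * ((1 : Fin N) : ℕ) / N / 2))
      < ∑ j, g (2 * sin (cyclicArc θ (1 : Fin N) j / 2)) := by
    rw [hone, Nat.cast_one, mul_one]
    exact card_mul_lt_sum_cyclicGap hmono hmem hf (by omega) hθ
  linarith [sum_lt_sum hblock ⟨1, hone_mem, hstrict⟩]
end

section
/- Fix κ > 0 and let g_κ(r) := e^{−κr}/(4πr). For any four distinct points y₁, …, y₄ on the unit sphere S² ⊂ ℝ³, ∑_{j ≠ j'} g_κ(‖y_j − y_{j'}‖) ≥ 12 g_κ(√(8/3)), with equality if and only if all six pairwise distances equal √(8/3), i.e. the points are the vertices of a regular tetrahedron inscribed in the sphere. -/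
/-!
Write `s_{jj'} = ‖y_j - y_{j'}‖²`. The function `s ↦ g_κ(√s)` is strictly convex and strictly
decreasing on `(0, ∞)`: `g_κ` is, up to a constant, the product `e^{-κr} · r⁻¹` of two positive,
decreasing, convex functions, and `√` is strictly concave. For `n` unit vectors,
`∑_{j ≠ j'} s_{jj'} = 2n² - 2‖∑ y_j‖² ≤ 2n²`, so the mean of the `n(n - 1)` numbers `s_{jj'}` is at
most `2n/(n - 1)`, which is `8/3` for `n = 4`. Jensen's inequality and monotonicity give
`∑ g_κ(√s_{jj'}) ≥ n(n - 1) g_κ(√(2n/(n - 1)))`; equality forces all `s_{jj'}` to equal their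
mean (strict convexity) and the mean to equal `2n/(n - 1)` (strict monotonicity).
-/

/-- The free resolvent kernel of `−Δ` in `ℝ³` at energy `−κ²`:
`g_κ(r) = e^{−κr}/(4πr)`. -/
noncomputable def resolventKernel3D (κ r : ℝ) : ℝ :=
  Real.exp (-κ * r) / (4 * Real.pi * r)

/-- The interaction energy `∑_{j ≠ j'} g_κ(‖y_j − y_{j'}‖)` of a family of points,
the sum running over ordered pairs of distinct indices. -/
noncomputable def interactionEnergy {n : ℕ} (κ : ℝ)
    (y : Fin n → EuclideanSpace ℝ (Fin 3)) : ℝ :=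
  ∑ p ∈ Finset.univ.offDiag, resolventKernel3D κ ‖y p.1 - y p.2‖

section Kernel

open Real Set

variable {κ : ℝ}

lemma strictAntiOn_resolventKernel3D (hκ : 0 ≤ κ) :
    StrictAntiOn (resolventKernel3D κ) (Ioi 0) := by
  intro r (hr : 0 < r) r' (hr' : 0 < r') hrr'
  calc resolventKernel3D κ r' ≤ exp (-κ * r) / (4 * π * r') := by
        unfold resolventKernel3D; gcongr exp ?_ / _; nlinarith
    _ < resolventKernel3D κ r := by unfold resolventKernel3D; gcongr

lemma convexOn_resolventKernel3D (hκ : 0 ≤ κ) : ConvexOn ℝ (Ioi 0) (resolventKernel3D κ) := by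
  have hexp : ConvexOn ℝ (Ioi 0) fun r : ℝ ↦ exp (-κ * r) :=
    (convexOn_exp.comp_linearMap ((-κ) • LinearMap.id)).subset (subset_univ _) (convex_Ioi 0)
  have hinv : ConvexOn ℝ (Ioi 0) fun r : ℝ ↦ r⁻¹ := by
    simpa using convexOn_zpow (𝕜 := ℝ) (-1)
  have hmonovary : MonovaryOn (fun r : ℝ ↦ exp (-κ * r)) (fun r ↦ r⁻¹) (Ioi 0) :=
    AntitoneOn.monovaryOn (fun _ _ _ _ h ↦ exp_le_exp.2 (by nlinarith))
      (fun _ hr _ _ h ↦ inv_anti₀ hr h)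
  refine ((hexp.mul hinv (fun _ _ ↦ (exp_pos _).le) (fun _ hr ↦ inv_nonneg.2 (le_of_lt hr))
    hmonovary).smul (c := (4 * π)⁻¹) (by positivity)).congr fun r _ ↦ ?_
  simp only [resolventKernel3D, Pi.mul_apply, smul_eq_mul]
  ring

lemma strictConvexOn_resolventKernel3D_sqrt (hκ : 0 ≤ κ) :
    StrictConvexOn ℝ (Ioi 0) fun s ↦ resolventKernel3D κ √s := by
  have himage : sqrt '' Ioi 0 = Ioi 0 := by
    ext r
    refine ⟨?_, fun (hr : 0 < r) ↦ ⟨r ^ 2, pow_pos hr 2, sqrt_sq hr.le⟩⟩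
    rintro ⟨s, hs, rfl⟩
    exact sqrt_pos.2 hs
  have hconv := convexOn_resolventKernel3D hκ
  have hanti := strictAntiOn_resolventKernel3D hκ
  rw [← himage] at hconv hanti
  exact hconv.comp_strictConcaveOn
    (strictConcaveOn_sqrt.subset Ioi_subset_Ici_self (convex_Ioi 0)) hanti

lemma strictAntiOn_resolventKernel3D_sqrt (hκ : 0 ≤ κ) :
    StrictAntiOn (fun s ↦ resolventKernel3D κ √s) (Ioi 0) :=
  (strictAntiOn_resolventKernel3D hκ).comp_strictMonoOn
    (fun _ hs _ _ h ↦ sqrt_lt_sqrt (le_of_lt hs) h) (fun _ hs ↦ sqrt_pos.2 hs)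

end Kernel

section Jensen

open Finset

variable {ι : Type*} {S : Set ℝ} {f : ℝ → ℝ} {t : Finset ι} {s : ι → ℝ} {a : ℝ}

lemma Convex.inv_card_mul_sum_mem (hS : Convex ℝ S) (ht : t.Nonempty) (hs : ∀ i ∈ t, s i ∈ S) :
    (#t : ℝ)⁻¹ * ∑ i ∈ t, s i ∈ S := by
  have hcard : (0 : ℝ) < #t := by exact_mod_cast ht.card_pos
  simpa [mul_sum] using hS.sum_mem (fun _ _ ↦ by positivity) (by simp [hcard.ne']) hs

lemma ConvexOn.map_inv_card_mul_sum_le (hf : ConvexOn ℝ S f) (ht : t.Nonempty)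
    (hs : ∀ i ∈ t, s i ∈ S) :
    f ((#t : ℝ)⁻¹ * ∑ i ∈ t, s i) ≤ (#t : ℝ)⁻¹ * ∑ i ∈ t, f (s i) := by
  have hcard : (0 : ℝ) < #t := by exact_mod_cast ht.card_pos
  simpa [mul_sum] using hf.map_sum_le (fun _ _ ↦ by positivity) (by simp [hcard.ne']) hs

lemma StrictConvexOn.map_inv_card_mul_sum_eq_iff (hf : StrictConvexOn ℝ S f) (ht : t.Nonempty)
    (hs : ∀ i ∈ t, s i ∈ S) :
    f ((#t : ℝ)⁻¹ * ∑ i ∈ t, s i) = (#t : ℝ)⁻¹ * ∑ i ∈ t, f (s i) ↔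
      ∀ j ∈ t, s j = (#t : ℝ)⁻¹ * ∑ i ∈ t, s i := by
  have hcard : (0 : ℝ) < #t := by exact_mod_cast ht.card_pos
  simpa [mul_sum] using hf.map_sum_eq_iff (fun _ _ ↦ by positivity) (by simp [hcard.ne']) hs

lemma ConvexOn.card_mul_le_sum_of_antitoneOn (hf : ConvexOn ℝ S f) (hf' : AntitoneOn f S)
    (ht : t.Nonempty) (hs : ∀ i ∈ t, s i ∈ S) (ha : a ∈ S) (hsum : ∑ i ∈ t, s i ≤ #t * a) :
    #t * f a ≤ ∑ i ∈ t, f (s i) := by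
  have hcard : (0 : ℝ) < #t := by exact_mod_cast ht.card_pos
  have hma : (#t : ℝ)⁻¹ * ∑ i ∈ t, s i ≤ a := by rwa [inv_mul_le_iff₀ hcard]
  rw [← le_inv_mul_iff₀ hcard]
  exact (hf' (hf.1.inv_card_mul_sum_mem ht hs) ha hma).trans (hf.map_inv_card_mul_sum_le ht hs)

lemma StrictConvexOn.sum_eq_card_mul_iff_of_strictAntiOn (hf : StrictConvexOn ℝ S f)
    (hf' : StrictAntiOn f S) (ht : t.Nonempty) (hs : ∀ i ∈ t, s i ∈ S) (ha : a ∈ S)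
    (hsum : ∑ i ∈ t, s i ≤ #t * a) :
    ∑ i ∈ t, f (s i) = #t * f a ↔ ∀ i ∈ t, s i = a := by
  refine ⟨fun heq ↦ ?_, fun h ↦ by simp [sum_congr rfl fun i hi ↦ congrArg f (h i hi)]⟩
  have hcard : (0 : ℝ) < #t := by exact_mod_cast ht.card_pos
  set m := (#t : ℝ)⁻¹ * ∑ i ∈ t, s i
  have hm : m ∈ S := hf.1.inv_card_mul_sum_mem ht hs
  have hma : m ≤ a := by rwa [inv_mul_le_iff₀ hcard]
  have havg : (#t : ℝ)⁻¹ * ∑ i ∈ t, f (s i) = f a := by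
    rw [heq, inv_mul_cancel_left₀ hcard.ne']
  have hfm : f m = f a :=
    le_antisymm (havg ▸ hf.convexOn.map_inv_card_mul_sum_le ht hs) (hf'.antitoneOn hm ha hma)
  have hmeq : m = a := hf'.injOn hm ha hfm
  intro i hi
  rw [← hmeq]
  exact (hf.map_inv_card_mul_sum_eq_iff ht hs).1 (hfm.trans havg.symm) i hi

end Jensen

section Geometry

open Finset

variable {ι E : Type*} [Fintype ι] [DecidableEq ι] [NormedAddCommGroup E] [InnerProductSpace ℝ E]

lemma sum_offDiag_norm_sub_sq (y : ι → E) :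
    ∑ p ∈ univ.offDiag, ‖y p.1 - y p.2‖ ^ 2 =
      2 * Fintype.card ι * ∑ i, ‖y i‖ ^ 2 - 2 * ‖∑ i, y i‖ ^ 2 := by
  have hdiag_zero : ∑ p ∈ univ.offDiag, ‖y p.1 - y p.2‖ ^ 2 =
      ∑ p ∈ univ ×ˢ univ, ‖y p.1 - y p.2‖ ^ 2 :=
    sum_subset (fun p _ ↦ by simp) fun p _ hp ↦ by simp_all [mem_offDiag]
  rw [hdiag_zero, sum_product, ← real_inner_self_eq_norm_sq (∑ i, y i), sum_inner]
  simp only [norm_sub_sq_real, inner_sum, sum_add_distrib, sum_sub_distrib, sum_const,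
    card_univ, nsmul_eq_mul, ← mul_sum]
  ring

lemma sum_offDiag_norm_sub_sq_le {y : ι → E} (hy : ∀ i, ‖y i‖ = 1) :
    ∑ p ∈ univ.offDiag, ‖y p.1 - y p.2‖ ^ 2 ≤ 2 * Fintype.card ι ^ 2 := by
  rw [sum_offDiag_norm_sub_sq]
  simp only [hy, one_pow, sum_const, card_univ, nsmul_eq_mul, mul_one]
  nlinarith [sq_nonneg ‖∑ i, y i‖]

end Geometry

section Energy

open Finset Real

variable {n : ℕ} {κ : ℝ} {y : Fin n → EuclideanSpace ℝ (Fin 3)}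

lemma interactionEnergy_eq_sum_sqrt :
    interactionEnergy κ y =
      ∑ p ∈ univ.offDiag, resolventKernel3D κ √(‖y p.1 - y p.2‖ ^ 2) := by
  simp only [interactionEnergy, sqrt_sq (norm_nonneg _)]

lemma norm_sub_sq_pos_of_injective (hy : Function.Injective y) :
    ∀ p ∈ (univ : Finset (Fin n)).offDiag, 0 < ‖y p.1 - y p.2‖ ^ 2 := fun p hp ↦ by
  have hne : y p.1 - y p.2 ≠ 0 := sub_ne_zero.2 (hy.ne (mem_offDiag.1 hp).2.2)
  exact pow_pos (norm_pos_iff.2 hne) 2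

lemma cast_card_offDiag_univ_fin (n : ℕ) :
    (#(univ : Finset (Fin n)).offDiag : ℝ) = n * (n - 1) := by
  rw [offDiag_card, card_univ, Fintype.card_fin, Nat.cast_sub (Nat.le_mul_self n), Nat.cast_mul]
  ring

lemma sum_offDiag_norm_sub_sq_le_card_mul (hn : 2 ≤ n) (hy : ∀ j, ‖y j‖ = 1) :
    ∑ p ∈ univ.offDiag, ‖y p.1 - y p.2‖ ^ 2 ≤
      #(univ : Finset (Fin n)).offDiag * (2 * n / (n - 1)) := by
  have hn' : (n : ℝ) - 1 ≠ 0 := by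
    have : (2 : ℝ) ≤ n := by exact_mod_cast hn
    linarith
  rw [cast_card_offDiag_univ_fin, mul_assoc, mul_div_cancel₀ _ hn']
  exact (sum_offDiag_norm_sub_sq_le hy).trans_eq (by simp only [Fintype.card_fin]; ring)

theorem mul_resolventKernel3D_le_interactionEnergy_and_eq_iff (hκ : 0 ≤ κ) (hn : 2 ≤ n)
    (hsphere : ∀ j, ‖y j‖ = 1) (hinj : Function.Injective y) :
    n * (n - 1) * resolventKernel3D κ √(2 * n / (n - 1)) ≤ interactionEnergy κ y ∧
      (interactionEnergy κ y = n * (n - 1) * resolventKernel3D κ √(2 * n / (n - 1)) ↔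
        ∀ j j', j ≠ j' → ‖y j - y j'‖ = √(2 * n / (n - 1))) := by
  have : Nontrivial (Fin n) := Fin.nontrivial_iff_two_le.2 hn
  obtain ⟨i, j, hij⟩ := exists_pair_ne (Fin n)
  have hpairs : (univ : Finset (Fin n)).offDiag.Nonempty := ⟨(i, j), by simpa using hij⟩
  have ha : 2 * (n : ℝ) / (n - 1) ∈ Set.Ioi 0 := by
    have : (2 : ℝ) ≤ n := by exact_mod_cast hn
    exact Set.mem_Ioi.2 (div_pos (by linarith) (by linarith))
  have hpos := norm_sub_sq_pos_of_injective hinj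
  have hsum := sum_offDiag_norm_sub_sq_le_card_mul hn hsphere
  rw [interactionEnergy_eq_sum_sqrt, ← cast_card_offDiag_univ_fin]
  refine ⟨(strictConvexOn_resolventKernel3D_sqrt hκ).convexOn.card_mul_le_sum_of_antitoneOn
    (strictAntiOn_resolventKernel3D_sqrt hκ).antitoneOn hpairs hpos ha hsum, ?_⟩
  rw [(strictConvexOn_resolventKernel3D_sqrt hκ).sum_eq_card_mul_iff_of_strictAntiOn
    (strictAntiOn_resolventKernel3D_sqrt hκ) hpairs hpos ha hsum]
  simp only [mem_offDiag, mem_univ, true_and, Prod.forall]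
  refine forall₂_congr fun j j' ↦ imp_congr_right fun _ ↦ ?_
  rw [← sqrt_inj (sq_nonneg _) ha.le, sqrt_sq (norm_nonneg _)]

end Energy

/-- For any four distinct points on the unit sphere S² ⊂ ℝ³,
∑_{j ≠ j'} g_κ(‖y_j − y_{j'}‖) ≥ 12 g_κ(√(8/3)), with equality iff all six pairwise
distances equal √(8/3) (the vertices of a regular tetrahedron inscribed in the sphere). -/
theorem sphere_four_points_energy_min (κ : ℝ) (hκ : 0 < κ)
    (y : Fin 4 → EuclideanSpace ℝ (Fin 3)) (hsphere : ∀ j, ‖y j‖ = 1)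
    (hdist : Function.Injective y) :
    interactionEnergy κ y ≥ 12 * resolventKernel3D κ (Real.sqrt (8 / 3)) ∧
    (interactionEnergy κ y = 12 * resolventKernel3D κ (Real.sqrt (8 / 3)) ↔
      ∀ j j' : Fin 4, j ≠ j' → ‖y j - y j'‖ = Real.sqrt (8 / 3)) := by
  obtain ⟨hle, heq⟩ :=
    mul_resolventKernel3D_le_interactionEnergy_and_eq_iff hκ.le (by norm_num) hsphere hdist
  have h12 : ((4 : ℕ) : ℝ) * ((4 : ℕ) - 1) = 12 := by norm_num
  have h83 : 2 * ((4 : ℕ) : ℝ) / ((4 : ℕ) - 1) = 8 / 3 := by norm_num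
  rw [h12, h83] at hle heq
  exact ⟨hle, heq⟩
end
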